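/- Two-point converse for systematic linear codes (Theorem 3): let f be a systematic linear code of rate 1/ρ with generator [I | A] over 𝔽₂, and fix ε₁ > ε₂, δ₁ ≤ ε₁/2, γ = ε₁ − 2δ₁. If BER_f(ε₁) ≤ δ₁, then BER_f(ε₂) ≥ (ε₂ − ((1−ε₂)/(1−ε₁))·[(ε₂/ε₁)γ + (ρ−1)(1−ε₁) − γ])/2. -/

import Mathlib

open Finset in
/-- Bit error rate of (encoder `f`, decoder `g`) over `BEC_ε`: sources are i.i.d.
`Ber(1/2)`, each coded bit is independently erased (replaced by `none`) with
probability `ε`, and the BER is the expected fraction of wrongly decoded data bits. -/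
noncomputable def becBER (k : ℕ) {ι : Type*} [Fintype ι] [DecidableEq ι]
    (f : (Fin k → ZMod 2) → ι → ZMod 2)
    (g : (ι → Option (ZMod 2)) → Fin k → ZMod 2) (ε : ℝ) : ℝ :=
  (1 / k) * ∑ s : Fin k → ZMod 2, (1 / 2 ^ k : ℝ) *
    ∑ E : Finset ι, ε ^ E.card * (1 - ε) ^ (Fintype.card ι - E.card) *
      ((univ.filter fun i : Fin k =>
        g (fun j => if j ∈ E then none else some (f s j)) i ≠ s i).card : ℝ)

/-!
Write an erasure pattern as the erased data positions `R` and the surviving parity positions `T`.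
If the unit vector `eᵢ` (`i ∈ R`) is not in the span of the columns of `A_{R,T}`, a functional
separating them yields a source difference `x` with `xᵢ = 1` that is invisible to the
observation, so every decoder gets bit `i` wrong for exactly half of the sources. Averaging,
`2k·BER(ε) ≥ εk − E[hrank(Ã(ε, 1−ε))]`, and the hypothesis at `ε₁` makes `E[hrank]` large there.
On the other side `hrank ≤ rank`; thinning the columns from `1−ε₂` to `1−ε₁` keeps at least the
fraction `(1−ε₁)/(1−ε₂)` of the expected rank (keep a fraction of a column basis), and thinning
the rows from `ε₁` to `ε₂` loses at least the fraction `1 − ε₂/ε₁` of the recoverable rows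
(projecting them away kills them). Chaining these bounds `E[hrank]` at `ε₂` from above, and
hence `BER(ε₂)` from below.
-/

open Finset

section BernoulliSampling

variable {σ : Type*}

/-- The probability that keeping each element of `s` independently with probability `q`
produces `S` (for `S ⊆ s`). -/
def bernWeight (q : ℝ) (s S : Finset σ) : ℝ := q ^ #S * (1 - q) ^ (#s - #S)

def bernExpect (q : ℝ) (s : Finset σ) (X : Finset σ → ℝ) : ℝ :=
  ∑ S ∈ s.powerset, bernWeight q s S * X S

variable {q : ℝ} {s : Finset σ} {X Y : Finset σ → ℝ}

lemma bernWeight_nonneg (hq₀ : 0 ≤ q) (hq₁ : q ≤ 1) (s S : Finset σ) :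
    0 ≤ bernWeight q s S :=
  mul_nonneg (pow_nonneg hq₀ _) (pow_nonneg (sub_nonneg.2 hq₁) _)

lemma bernExpect_univ [Fintype σ] (q : ℝ) (X : Finset σ → ℝ) :
    bernExpect q univ X = ∑ S, bernWeight q univ S * X S := by
  rw [bernExpect, powerset_univ]

lemma sum_bernWeight (q : ℝ) (s : Finset σ) : ∑ S ∈ s.powerset, bernWeight q s S = 1 := by
  simp only [bernWeight, sum_pow_mul_eq_add_pow, add_sub_cancel, one_pow]

lemma bernExpect_const (q c : ℝ) (s : Finset σ) : bernExpect q s (fun _ => c) = c := by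
  rw [bernExpect, ← sum_mul, sum_bernWeight, one_mul]

lemma bernExpect_mono (hq₀ : 0 ≤ q) (hq₁ : q ≤ 1) (h : ∀ S ⊆ s, X S ≤ Y S) :
    bernExpect q s X ≤ bernExpect q s Y :=
  sum_le_sum fun S hS =>
    mul_le_mul_of_nonneg_left (h S (mem_powerset.1 hS)) (bernWeight_nonneg hq₀ hq₁ s S)

lemma bernExpect_add :
    bernExpect q s (fun S => X S + Y S) = bernExpect q s X + bernExpect q s Y := by
  simp only [bernExpect, mul_add, sum_add_distrib]

lemma bernExpect_sub :
    bernExpect q s (fun S => X S - Y S) = bernExpect q s X - bernExpect q s Y := by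
  simp only [bernExpect, mul_sub, sum_sub_distrib]

lemma bernExpect_const_mul (c : ℝ) :
    bernExpect q s (fun S => c * X S) = c * bernExpect q s X := by
  simp only [bernExpect, mul_sum, mul_left_comm c]

lemma bernExpect_comm {τ : Type*} (p : ℝ) (t : Finset τ) (F : Finset σ → Finset τ → ℝ) :
    bernExpect q s (fun S => bernExpect p t (F S)) =
      bernExpect p t (fun T => bernExpect q s (F · T)) := by
  simp only [bernExpect, mul_sum]
  rw [sum_comm]
  simp only [mul_left_comm]

lemma bernExpect_toLeft_toRight {α β : Type*} [Fintype α] [Fintype β] (q : ℝ)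
    (F : Finset α → Finset β → ℝ) :
    bernExpect q univ (fun E : Finset (α ⊕ β) => F E.toLeft E.toRight) =
      bernExpect q univ fun R => bernExpect q univ fun T => F R T := by
  simp only [bernExpect_univ, mul_sum, ← Fintype.sum_prod_type']
  refine Fintype.sum_equiv sumEquiv.toEquiv _ _ fun E => ?_
  have hL : #E.toLeft ≤ Fintype.card α := card_le_univ _
  have hR : #E.toRight ≤ Fintype.card β := card_le_univ _
  simp only [RelIso.coe_fn_toEquiv, sumEquiv_apply_fst, sumEquiv_apply_snd, bernWeight,
    card_univ, Fintype.card_sum, ← card_toLeft_add_card_toRight (u := E),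
    show Fintype.card α + Fintype.card β - (#E.toLeft + #E.toRight) =
      (Fintype.card α - #E.toLeft) + (Fintype.card β - #E.toRight) by omega, pow_add]
  ring

section

variable [DecidableEq σ]

lemma bernExpect_ite_mem (q : ℝ) {j : σ} (hj : j ∈ s) :
    bernExpect q s (fun S => if j ∈ S then 1 else 0) = q := by
  obtain ⟨s, hjs, rfl⟩ : ∃ s', j ∉ s' ∧ s = insert j s' :=
    ⟨s.erase j, notMem_erase j s, (insert_erase hj).symm⟩
  rw [bernExpect, sum_powerset_insert hjs]
  have hout : ∀ S ∈ s.powerset, j ∉ S := fun S hS h => hjs (mem_powerset.1 hS h)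
  have hin : ∀ S ∈ s.powerset,
      bernWeight q (insert j s) (insert j S) = q * bernWeight q s S := by
    intro S hS
    rw [bernWeight, bernWeight, card_insert_of_notMem hjs, card_insert_of_notMem (hout S hS),
      Nat.add_sub_add_right, pow_succ]
    ring
  simp only [mem_insert_self, if_true, mul_one]
  rw [sum_congr rfl fun S hS => by rw [if_neg (hout S hS), mul_zero], sum_const_zero, zero_add,
    sum_congr rfl hin, ← mul_sum, sum_bernWeight, mul_one]

lemma bernExpect_card_inter (q : ℝ) {B : Finset σ} (hB : B ⊆ s) :
    bernExpect q s (fun S => (#(B ∩ S) : ℝ)) = q * #B := by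
  have hcount : ∀ S : Finset σ, (#(B ∩ S) : ℝ) = ∑ j ∈ B, if j ∈ S then 1 else 0 := by
    intro S
    rw [sum_boole, filter_mem_eq_inter]
  simp only [bernExpect, hcount, mul_sum]
  rw [sum_comm]
  calc ∑ j ∈ B, ∑ S ∈ s.powerset, bernWeight q s S * (if j ∈ S then 1 else 0)
      = ∑ _j ∈ B, q := sum_congr rfl fun j hj => bernExpect_ite_mem q (hB hj)
    _ = q * #B := by rw [sum_const, nsmul_eq_mul, mul_comm]

lemma sum_Icc_bernWeight_mul_bernWeight (p β : ℝ) {S s : Finset σ} (hS : S ⊆ s) :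
    ∑ S' ∈ Icc S s, bernWeight p s S' * bernWeight β S' S = bernWeight (p * β) s S := by
  have hdisj : ∀ D ∈ (s \ S).powerset, Disjoint S D := fun D hD =>
    disjoint_of_subset_right (mem_powerset.1 hD) disjoint_sdiff
  rw [Icc_eq_image_powerset hS, sum_image fun D₁ h₁ D₂ h₂ h => by
    rw [← union_sdiff_cancel_left (hdisj D₁ h₁), ← union_sdiff_cancel_left (hdisj D₂ h₂)]
    exact congrArg (· \ S) h]
  have hterm : ∀ D ∈ (s \ S).powerset, bernWeight p s (S ∪ D) * bernWeight β (S ∪ D) S =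
      (p * β) ^ #S * ((p * (1 - β)) ^ #D * (1 - p) ^ (#(s \ S) - #D)) := by
    intro D hD
    have hDs : #D ≤ #(s \ S) := card_le_card (mem_powerset.1 hD)
    rw [card_sdiff_of_subset hS] at hDs ⊢
    rw [bernWeight, bernWeight, card_union_of_disjoint (hdisj D hD), Nat.add_sub_cancel_left,
      show #s - (#S + #D) = #s - #S - #D by omega, mul_pow, mul_pow]
    ring
  rw [sum_congr rfl hterm, ← mul_sum, sum_pow_mul_eq_add_pow, bernWeight, card_sdiff_of_subset hS,
    show p * (1 - β) + (1 - p) = 1 - p * β by ring]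

lemma bernExpect_bernExpect (p β : ℝ) (s : Finset σ) (X : Finset σ → ℝ) :
    bernExpect p s (fun S' => bernExpect β S' X) = bernExpect (p * β) s X := by
  simp only [bernExpect, mul_sum]
  rw [sum_comm' (t' := s.powerset) (s' := fun S => Icc S s) fun S' S => by
    simp only [mem_powerset, mem_Icc]; constructor <;> intro h <;> tauto]
  refine sum_congr rfl fun S hS => ?_
  simp only [← mul_assoc]
  rw [← sum_mul, sum_Icc_bernWeight_mul_bernWeight p β (mem_powerset.1 hS)]

lemma bernExpect_compl [Fintype σ] (q : ℝ) (X : Finset σ → ℝ) :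
    bernExpect q univ (fun T => X Tᶜ) = bernExpect (1 - q) univ X := by
  rw [bernExpect_univ, bernExpect_univ]
  refine Fintype.sum_equiv (Equiv.mk compl compl compl_compl compl_compl) _ _ fun T => ?_
  have hT : #T ≤ Fintype.card σ := card_le_univ T
  simp only [Equiv.coe_fn_mk, bernWeight, card_compl, card_univ, sub_sub_cancel,
    Nat.sub_sub_self hT, mul_comm]

end

lemma bernExpect_card (q : ℝ) (s : Finset σ) :
    bernExpect q s (fun S => (#S : ℝ)) = q * #s := by
  classical
  rw [← bernExpect_card_inter q (subset_refl s)]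
  exact sum_congr rfl fun S hS => by simp only [inter_eq_right.2 (mem_powerset.1 hS)]

end BernoulliSampling

section LinearAlgebra

open Module Submodule

lemma card_le_finrank_of_linearIndepOn {K M ι : Type*} [DivisionRing K] [AddCommGroup M]
    [Module K M] {v : ι → M} {s : Finset ι} (hs : LinearIndepOn K v (s : Set ι))
    {W : Submodule K M} [FiniteDimensional K W] (hW : ∀ i ∈ s, v i ∈ W) :
    #s ≤ finrank K W := by
  have hli : LinearIndependent K (fun i : s => (⟨v i, hW i i.2⟩ : W)) :=
    LinearIndependent.of_comp W.subtype hs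
  simpa using hli.fintype_card_le_finrank

lemma finrank_span_image_eq_card {K M ι : Type*} [DivisionRing K] [AddCommGroup M]
    [Module K M] {v : ι → M} {s : Finset ι} (hs : LinearIndepOn K v (s : Set ι)) :
    finrank K (span K (v '' s)) = #s := by
  rw [Set.image_eq_range, finrank_span_eq_card hs]
  simp

variable {ι κ K : Type*} [Field K] [DecidableEq ι]

def zeroOutside (R : Finset ι) : (ι → K) →ₗ[K] ι → K where
  toFun v i := if i ∈ R then v i else 0
  map_add' v w := by ext i; by_cases hi : i ∈ R <;> simp [hi]
  map_smul' c v := by ext i; by_cases hi : i ∈ R <;> simp [hi]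

@[simp] lemma zeroOutside_apply (R : Finset ι) (v : ι → K) (i : ι) :
    zeroOutside R v i = if i ∈ R then v i else 0 := rfl

lemma zeroOutside_zeroOutside {R R' : Finset ι} (h : R ⊆ R') (v : ι → K) :
    zeroOutside R (zeroOutside R' v) = zeroOutside R v := by
  ext i
  by_cases hi : i ∈ R
  · simp [hi, h hi]
  · simp [hi]

lemma zeroOutside_single {R : Finset ι} {i : ι} (hi : i ∉ R) :
    zeroOutside R (Pi.single i (1 : K)) = 0 := by
  ext j
  by_cases hj : j ∈ R
  · simp [hj, ne_of_mem_of_not_mem hj hi]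
  · simp [hj]

lemma dotProduct_zeroOutside [Fintype ι] (R : Finset ι) (v w : ι → K) :
    v ⬝ᵥ zeroOutside R w = zeroOutside R v ⬝ᵥ w := by
  simp only [dotProduct, zeroOutside_apply, mul_ite, ite_mul, mul_zero, zero_mul]

namespace Matrix

variable (A : Matrix ι κ K)

/-- The column space of the submatrix `A_{R,T}`, with its vectors padded by zeros to `ι → K`. -/
def colSpanOn (R : Finset ι) (T : Finset κ) : Submodule K (ι → K) :=
  span K ((fun t => zeroOutside R (Aᵀ t)) '' T)

noncomputable def rankOn (R : Finset ι) (T : Finset κ) : ℕ := finrank K (A.colSpanOn R T)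

/-- The data bits in `R` that the surviving parity bits `T` determine; their number is the
paper's `hrank` of `A_{R,T}`. -/
noncomputable def recoverableRows (R : Finset ι) (T : Finset κ) : Finset ι :=
  open Classical in {i ∈ R | Pi.single i 1 ∈ A.colSpanOn R T}

noncomputable def hrankOn (R : Finset ι) (T : Finset κ) : ℕ := #(A.recoverableRows R T)

instance (R : Finset ι) (T : Finset κ) : FiniteDimensional K (A.colSpanOn R T) :=
  FiniteDimensional.span_of_finite K (T.finite_toSet.image _)

variable {A}

lemma mem_recoverableRows {R : Finset ι} {T : Finset κ} {i : ι} :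
    i ∈ A.recoverableRows R T ↔ i ∈ R ∧ Pi.single i 1 ∈ A.colSpanOn R T := by
  classical
  unfold recoverableRows
  exact mem_filter

lemma recoverableRows_subset (R : Finset ι) (T : Finset κ) : A.recoverableRows R T ⊆ R :=
  fun _ hi => (mem_recoverableRows.1 hi).1

lemma single_mem_colSpanOn {R : Finset ι} {T : Finset κ} {i : ι}
    (hi : i ∈ A.recoverableRows R T) : Pi.single i 1 ∈ A.colSpanOn R T :=
  (mem_recoverableRows.1 hi).2

lemma hrankOn_le_rankOn (R : Finset ι) (T : Finset κ) : A.hrankOn R T ≤ A.rankOn R T :=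
  card_le_finrank_of_linearIndepOn ((Pi.linearIndependent_single_one ι K).linearIndepOn _)
    fun _ => single_mem_colSpanOn

lemma rankOn_le_card (R : Finset ι) (T : Finset κ) : A.rankOn R T ≤ #T := by
  classical
  rw [rankOn, colSpanOn, ← coe_image]
  exact (finrank_span_finset_le_card _).trans card_image_le

lemma map_colSpanOn {R R' : Finset ι} (h : R ⊆ R') (T : Finset κ) :
    (A.colSpanOn R' T).map (zeroOutside R) = A.colSpanOn R T := by
  rw [colSpanOn, map_span, ← Set.image_comp]
  congr 2
  exact funext fun t => zeroOutside_zeroOutside h _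

lemma rankOn_add_card_sdiff_le {R R' : Finset ι} (h : R ⊆ R') (T : Finset κ) :
    A.rankOn R T + #(A.recoverableRows R' T \ R) ≤ A.rankOn R' T := by
  set W := A.colSpanOn R' T
  set f := (zeroOutside R).domRestrict W
  have hrange : finrank K (LinearMap.range f) = A.rankOn R T := by
    rw [LinearMap.range_domRestrict, map_colSpanOn h]; rfl
  have hker : #(A.recoverableRows R' T \ R) ≤ finrank K (LinearMap.ker f) := by
    rw [← finrank_map_subtype_eq]
    refine card_le_finrank_of_linearIndepOn
      ((Pi.linearIndependent_single_one ι K).linearIndepOn _) fun i hi => ?_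
    obtain ⟨hiW, hiR⟩ := mem_sdiff.1 hi
    exact ⟨⟨_, single_mem_colSpanOn hiW⟩, LinearMap.mem_ker.2 (zeroOutside_single hiR), rfl⟩
  have hW : finrank K W = A.rankOn R' T := rfl
  have := f.finrank_range_add_finrank_ker
  omega

lemma exists_subset_card_eq_rankOn [DecidableEq κ] (R : Finset ι) (T' : Finset κ) :
    ∃ B ⊆ T', #B = A.rankOn R T' ∧ ∀ T ⊆ T', #(B ∩ T) ≤ A.rankOn R T := by
  classical
  obtain ⟨b, hbT', -, hspan, hli⟩ :=
    exists_linearIndepOn_extension (v := fun t => zeroOutside R (Aᵀ t))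
      (linearIndepOn_empty K _) (Set.empty_subset (T' : Set κ))
  set B := {t ∈ T' | t ∈ b}
  have hB : (B : Set κ) = b := by
    ext t; simpa [B] using fun ht => hbT' ht
  refine ⟨B, filter_subset _ _, ?_, fun T hT => ?_⟩
  · have hspan_eq : span K ((fun t => zeroOutside R (Aᵀ t)) '' b) = A.colSpanOn R T' :=
      le_antisymm (span_mono (Set.image_mono hbT')) (span_le.2 hspan)
    rw [rankOn, ← hspan_eq, ← hB, finrank_span_image_eq_card (hB ▸ hli)]
  · refine card_le_finrank_of_linearIndepOn
      ((hB ▸ hli).mono (coe_subset.2 inter_subset_left)) fun t ht => ?_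
    exact subset_span ⟨t, by simp [(mem_inter.1 ht).2], rfl⟩

lemma exists_vecMul_eq_zero [Fintype ι] {R : Finset ι} {T : Finset κ} {i : ι} (hiR : i ∈ R)
    (hi : i ∉ A.recoverableRows R T) :
    ∃ x : ι → K, x i = 1 ∧ (∀ j ∉ R, x j = 0) ∧ ∀ t ∈ T, (x ᵥ* A) t = 0 := by
  have hnot : Pi.single i 1 ∉ A.colSpanOn R T := fun h => hi (mem_recoverableRows.2 ⟨hiR, h⟩)
  obtain ⟨φ, hφi, hφW⟩ := exists_dual_map_eq_bot_of_notMem hnot inferInstance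
  set v := (dotProductEquiv K ι).symm φ
  have hφ : ∀ w, φ w = v ⬝ᵥ w := fun w => by
    rw [← (dotProductEquiv K ι).apply_symm_apply φ]; rfl
  have hvi : v i ≠ 0 := by simpa [hφ] using hφi
  refine ⟨zeroOutside R ((v i)⁻¹ • v), by simp [hiR, hvi], fun j hj => by simp [hj],
    fun t ht => ?_⟩
  have hcol : zeroOutside R (Aᵀ t) ∈ A.colSpanOn R T := subset_span ⟨t, ht, rfl⟩
  have h0 : φ (zeroOutside R (Aᵀ t)) = 0 :=
    (Submodule.eq_bot_iff _).1 hφW _ (mem_map_of_mem hcol)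
  change zeroOutside R ((v i)⁻¹ • v) ⬝ᵥ Aᵀ t = 0
  rw [← dotProduct_zeroOutside, smul_dotProduct, ← hφ, h0, smul_zero]

end Matrix

end LinearAlgebra

section Expectation

open Matrix

variable {ι κ K : Type*} [DecidableEq ι] [Field K]

lemma bernExpect_rankOn_le (A : Matrix ι κ K) {β : ℝ} (hβ₀ : 0 ≤ β) (hβ₁ : β ≤ 1)
    (R' : Finset ι) (T : Finset κ) :
    bernExpect β R' (fun R => (A.rankOn R T : ℝ)) ≤ #T - (1 - β) * A.hrankOn R' T := by
  have hpoint : ∀ R ⊆ R', (A.rankOn R T : ℝ) ≤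
      (A.rankOn R' T - A.hrankOn R' T : ℝ) + #(A.recoverableRows R' T ∩ R) := by
    intro R hR
    have hsplit := card_inter_add_card_sdiff (A.recoverableRows R' T) R
    have hproj := rankOn_add_card_sdiff_le (A := A) hR T
    have : A.rankOn R T + A.hrankOn R' T ≤ A.rankOn R' T + #(A.recoverableRows R' T ∩ R) := by
      rw [hrankOn]; omega
    have := (Nat.cast_le (α := ℝ)).2 this
    push_cast at this
    linarith
  have hcard : (A.rankOn R' T : ℝ) ≤ #T := by exact_mod_cast rankOn_le_card R' T
  calc bernExpect β R' (fun R => (A.rankOn R T : ℝ))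
      ≤ bernExpect β R' fun R =>
          (A.rankOn R' T - A.hrankOn R' T : ℝ) + #(A.recoverableRows R' T ∩ R) :=
        bernExpect_mono hβ₀ hβ₁ hpoint
    _ = A.rankOn R' T - A.hrankOn R' T + β * A.hrankOn R' T := by
        rw [bernExpect_add, bernExpect_const, bernExpect_card_inter β (recoverableRows_subset _ _),
          hrankOn]
    _ ≤ #T - (1 - β) * A.hrankOn R' T := by linarith

lemma mul_rankOn_le_bernExpect [DecidableEq κ] (A : Matrix ι κ K) {α : ℝ} (hα₀ : 0 ≤ α)
    (hα₁ : α ≤ 1) (R : Finset ι) (T' : Finset κ) :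
    α * A.rankOn R T' ≤ bernExpect α T' fun T => (A.rankOn R T : ℝ) := by
  obtain ⟨B, hBT', hB, hBle⟩ := exists_subset_card_eq_rankOn (A := A) R T'
  calc α * A.rankOn R T' = bernExpect α T' fun T => (#(B ∩ T) : ℝ) := by
        rw [bernExpect_card_inter α hBT', hB]
    _ ≤ _ := bernExpect_mono hα₀ hα₁ fun T hT => by exact_mod_cast hBle T hT

variable [Fintype ι] [Fintype κ]

/-- `E[hrank(Ã(p, q))]` in the paper's notation. -/
noncomputable def expectHRank (A : Matrix ι κ K) (p q : ℝ) : ℝ :=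
  bernExpect p univ fun R => bernExpect q univ fun T => (A.hrankOn R T : ℝ)

noncomputable def expectRank (A : Matrix ι κ K) (p q : ℝ) : ℝ :=
  bernExpect p univ fun R => bernExpect q univ fun T => (A.rankOn R T : ℝ)

lemma expectHRank_le_expectRank (A : Matrix ι κ K) {p q : ℝ} (hp₀ : 0 ≤ p) (hp₁ : p ≤ 1)
    (hq₀ : 0 ≤ q) (hq₁ : q ≤ 1) : expectHRank A p q ≤ expectRank A p q :=
  bernExpect_mono hp₀ hp₁ fun R _ => bernExpect_mono hq₀ hq₁ fun T _ => by
    exact_mod_cast hrankOn_le_rankOn R T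

lemma expectRank_mul_le (A : Matrix ι κ K) {p β q : ℝ} (hp₀ : 0 ≤ p) (hp₁ : p ≤ 1)
    (hβ₀ : 0 ≤ β) (hβ₁ : β ≤ 1) (hq₀ : 0 ≤ q) (hq₁ : q ≤ 1) :
    expectRank A (p * β) q ≤ q * Fintype.card κ - (1 - β) * expectHRank A p q := by
  calc expectRank A (p * β) q
      = bernExpect q univ fun T => bernExpect p univ fun R' =>
          bernExpect β R' fun R => (A.rankOn R T : ℝ) := by
        rw [expectRank, bernExpect_comm]
        simp only [bernExpect_bernExpect]
    _ ≤ bernExpect q univ fun T => bernExpect p univ fun R' =>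
          (#T - (1 - β) * A.hrankOn R' T : ℝ) :=
        bernExpect_mono hq₀ hq₁ fun T _ => bernExpect_mono hp₀ hp₁ fun R' _ =>
          bernExpect_rankOn_le A hβ₀ hβ₁ R' T
    _ = q * Fintype.card κ - (1 - β) * expectHRank A p q := by
        simp only [bernExpect_sub, bernExpect_const, bernExpect_const_mul, bernExpect_card,
          card_univ]
        rw [expectHRank, bernExpect_comm]

lemma mul_expectRank_le [DecidableEq κ] (A : Matrix ι κ K) {p q α : ℝ} (hp₀ : 0 ≤ p)
    (hp₁ : p ≤ 1) (hq₀ : 0 ≤ q) (hq₁ : q ≤ 1) (hα₀ : 0 ≤ α) (hα₁ : α ≤ 1) :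
    α * expectRank A p q ≤ expectRank A p (q * α) := by
  rw [expectRank, expectRank, ← bernExpect_const_mul]
  refine bernExpect_mono hp₀ hp₁ fun R _ => ?_
  rw [← bernExpect_const_mul, ← bernExpect_bernExpect]
  exact bernExpect_mono hq₀ hq₁ fun T' _ => mul_rankOn_le_bernExpect A hα₀ hα₁ R T'

lemma expectHRank_le_of_lt [DecidableEq κ] (A : Matrix ι κ K) {ε₁ ε₂ : ℝ} (hε₂ : 0 < ε₂)
    (h21 : ε₂ < ε₁) (hε₁ : ε₁ < 1) :
    expectHRank A ε₂ (1 - ε₂) ≤ (1 - ε₂) / (1 - ε₁) *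
      ((1 - ε₁) * Fintype.card κ - (1 - ε₂ / ε₁) * expectHRank A ε₁ (1 - ε₁)) := by
  set α := (1 - ε₁) / (1 - ε₂)
  set β := ε₂ / ε₁
  have hε₁₀ : ε₁ ≠ 0 := by linarith
  have hε₁₁ : 1 - ε₁ ≠ 0 := by linarith
  have hε₂₁ : 1 - ε₂ ≠ 0 := by linarith
  have hα : (1 - ε₂) * α = 1 - ε₁ := by simp only [α]; field_simp
  have hβ : ε₁ * β = ε₂ := by simp only [β]; field_simp
  have hα₀ : 0 ≤ α := div_nonneg (by linarith) (by linarith)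
  have hα₁ : α ≤ 1 := div_le_one_of_le₀ (by linarith) (by linarith)
  have hβ₀ : 0 ≤ β := div_nonneg hε₂.le (by linarith)
  have hβ₁ : β ≤ 1 := div_le_one_of_le₀ h21.le (by linarith)
  have hle := expectHRank_le_expectRank A (p := ε₂) (q := 1 - ε₂) hε₂.le (by linarith)
    (by linarith) (by linarith)
  have hcols := mul_expectRank_le A (p := ε₂) (q := 1 - ε₂) hε₂.le (by linarith) (by linarith)
    (by linarith) hα₀ hα₁
  have hrows := expectRank_mul_le A (p := ε₁) (q := 1 - ε₁) (by linarith) hε₁.le hβ₀ hβ₁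
    (by linarith) (by linarith)
  rw [hα] at hcols
  rw [hβ] at hrows
  calc expectHRank A ε₂ (1 - ε₂)
      = (1 - ε₂) / (1 - ε₁) * (α * expectHRank A ε₂ (1 - ε₂)) := by
        simp only [α]; field_simp
    _ ≤ _ := mul_le_mul_of_nonneg_left (by linarith [mul_le_mul_of_nonneg_left hle hα₀])
        (div_nonneg (by linarith) (by linarith))

end Expectation

section Decoding

open Matrix

lemma two_mul_card_filter_ne_eq_card {ι : Type*} [Fintype ι] [DecidableEq ι]
    {h : (ι → ZMod 2) → ZMod 2} {x : ι → ZMod 2} {i : ι} (hxi : x i = 1)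
    (hh : ∀ s, h (s + x) = h s) :
    2 * #{s | h s ≠ s i} = Fintype.card (ι → ZMod 2) := by
  have hflip : ∀ s, h (s + x) = (s + x) i ↔ h s ≠ s i := fun s => by
    rw [hh, Pi.add_apply, hxi]
    generalize h s = a
    generalize s i = b
    revert a b
    decide
  have hswap : #{s | h s ≠ s i} = #{s | h s = s i} :=
    card_equiv (Equiv.addRight x) fun s => by
      simp only [mem_filter, mem_univ, true_and, Equiv.coe_addRight]
      exact (hflip s).symm
  rw [two_mul]
  nth_rw 1 [hswap]
  exact card_filter_add_card_filter_not _

def eraseAt {α F : Type*} [DecidableEq α] (E : Finset α) (c : α → F) : α → Option F :=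
  fun j => if j ∈ E then none else some (c j)

variable {ι κ : Type*} [Fintype ι] [DecidableEq ι] [DecidableEq κ]

lemma eraseAt_sum_elim_vecMul_add {R : Type*} [NonUnitalNonAssocSemiring R]
    {A : Matrix ι κ R} {E : Finset (ι ⊕ κ)} {x : ι → R} (hx₁ : ∀ j ∉ E.toLeft, x j = 0)
    (hx₂ : ∀ t ∉ E.toRight, (x ᵥ* A) t = 0) (s : ι → R) :
    eraseAt E (Sum.elim (s + x) ((s + x) ᵥ* A)) = eraseAt E (Sum.elim s (s ᵥ* A)) := by
  ext1 j
  by_cases hj : j ∈ E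
  · simp [eraseAt, hj]
  rcases j with i | t
  · simp [eraseAt, hj, hx₁ i (mem_toLeft.not.2 hj)]
  · simp [eraseAt, hj, add_vecMul, hx₂ t (mem_toRight.not.2 hj)]

variable [Fintype κ]

lemma card_sdiff_recoverableRows_mul_le (A : Matrix ι κ (ZMod 2))
    (g : (ι ⊕ κ → Option (ZMod 2)) → ι → ZMod 2) (E : Finset (ι ⊕ κ)) :
    #(E.toLeft \ A.recoverableRows E.toLeft E.toRightᶜ) * Fintype.card (ι → ZMod 2) ≤
      2 * ∑ s, #{i | g (eraseAt E (Sum.elim s (s ᵥ* A))) i ≠ s i} := by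
  set err : (ι → ZMod 2) → ι → Prop :=
    fun s i => g (eraseAt E (Sum.elim s (s ᵥ* A))) i ≠ s i
  have hhalf : ∀ i ∈ E.toLeft \ A.recoverableRows E.toLeft E.toRightᶜ,
      2 * #{s | err s i} = Fintype.card (ι → ZMod 2) := by
    intro i hi
    obtain ⟨hiR, hirec⟩ := mem_sdiff.1 hi
    obtain ⟨x, hxi, hx₁, hx₂⟩ := exists_vecMul_eq_zero hiR hirec
    refine two_mul_card_filter_ne_eq_card hxi fun s => ?_
    rw [eraseAt_sum_elim_vecMul_add hx₁ (fun t ht => hx₂ t (mem_compl.2 ht))]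
  have hswap : ∑ s, #{i | err s i} = ∑ i, #{s | err s i} := by
    simp only [card_filter]
    exact sum_comm
  calc #(E.toLeft \ A.recoverableRows E.toLeft E.toRightᶜ) * Fintype.card (ι → ZMod 2)
      = ∑ i ∈ E.toLeft \ A.recoverableRows E.toLeft E.toRightᶜ, 2 * #{s | err s i} := by
        rw [sum_congr rfl hhalf, sum_const, smul_eq_mul]
    _ ≤ ∑ i, 2 * #{s | err s i} := sum_le_sum_of_subset (subset_univ _)
    _ = 2 * ∑ s, #{i | err s i} := by rw [hswap, mul_sum]

lemma becBER_eq_bernExpect {k : ℕ} {α : Type*} [Fintype α] [DecidableEq α]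
    (f : (Fin k → ZMod 2) → α → ZMod 2) (g : (α → Option (ZMod 2)) → Fin k → ZMod 2)
    (ε : ℝ) :
    becBER k f g ε = bernExpect ε univ (fun E => ∑ s, (#{i | g (eraseAt E (f s)) i ≠ s i} : ℝ)) /
      (k * 2 ^ k) := by
  simp only [becBER, bernExpect_univ, bernWeight, card_univ, mul_sum, sum_div]
  rw [sum_comm]
  refine sum_congr rfl fun E _ => sum_congr rfl fun s _ => ?_
  unfold eraseAt
  ring

lemma sub_expectHRank_le_two_mul_becBER {k : ℕ} (hk : 0 < k) (A : Matrix (Fin k) κ (ZMod 2))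
    (g : (Fin k ⊕ κ → Option (ZMod 2)) → Fin k → ZMod 2) {ε : ℝ} (hε₀ : 0 ≤ ε) (hε₁ : ε ≤ 1) :
    ε * k - expectHRank A ε (1 - ε) ≤
      2 * k * becBER k (fun s => Sum.elim s (s ᵥ* A)) g ε := by
  set N : Finset (Fin k ⊕ κ) → ℝ :=
    fun E => ∑ s, (#{i | g (eraseAt E (Sum.elim s (s ᵥ* A))) i ≠ s i} : ℝ)
  have hpattern : ∀ E : Finset (Fin k ⊕ κ),
      (#E.toLeft : ℝ) - A.hrankOn E.toLeft E.toRightᶜ ≤ 2 / 2 ^ k * N E := by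
    intro E
    have hle : A.hrankOn E.toLeft E.toRightᶜ ≤ #E.toLeft :=
      card_le_card (recoverableRows_subset _ _)
    have h := card_sdiff_recoverableRows_mul_le A g E
    rw [card_sdiff_of_subset (recoverableRows_subset _ _), Fintype.card_fun, ZMod.card,
      Fintype.card_fin] at h
    rw [div_mul_eq_mul_div, le_div_iff₀ (by positivity), ← Nat.cast_sub hle, hrankOn]
    simp only [N]
    exact_mod_cast h
  calc ε * k - expectHRank A ε (1 - ε)
      = bernExpect ε univ fun R => bernExpect ε univ fun T => (#R : ℝ) - A.hrankOn R Tᶜ := by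
        have hcompl : ∀ R, (bernExpect ε univ fun T => (A.hrankOn R Tᶜ : ℝ)) =
            bernExpect (1 - ε) univ fun T => (A.hrankOn R T : ℝ) :=
          fun R => bernExpect_compl ε fun T => (A.hrankOn R T : ℝ)
        simp only [expectHRank, bernExpect_sub, bernExpect_const, hcompl, bernExpect_card,
          card_univ, Fintype.card_fin]
    _ = bernExpect ε univ fun E => (#E.toLeft : ℝ) - A.hrankOn E.toLeft E.toRightᶜ :=
        (bernExpect_toLeft_toRight ε fun R T => (#R : ℝ) - A.hrankOn R Tᶜ).symm
    _ ≤ bernExpect ε univ fun E => 2 / 2 ^ k * N E :=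
        bernExpect_mono hε₀ hε₁ fun E _ => hpattern E
    _ = 2 * k * becBER k (fun s => Sum.elim s (s ᵥ* A)) g ε := by
        rw [bernExpect_const_mul, becBER_eq_bernExpect]
        field_simp
        rfl

end Decoding

theorem systematic_linear_two_point_converse_general {k m : ℕ} (hk : 0 < k)
    (A : Matrix (Fin k) (Fin m) (ZMod 2))
    (ρ : ℝ) (hρ : ρ = ((k + m : ℕ) : ℝ) / k)
    (ε₁ ε₂ δ₁ : ℝ) (hε₁ : ε₁ ∈ Set.Ioo (0:ℝ) 1) (hε₂ : ε₂ ∈ Set.Ioo (0:ℝ) 1)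
    (h21 : ε₂ < ε₁)
    (γ : ℝ) (hγ : γ = ε₁ - 2 * δ₁)
    (g₁ g₂ : ((Fin k ⊕ Fin m) → Option (ZMod 2)) → Fin k → ZMod 2)
    (hach : becBER k (fun s => Sum.elim s (Matrix.vecMul s A)) g₁ ε₁ ≤ δ₁) :
    becBER k (fun s => Sum.elim s (Matrix.vecMul s A)) g₂ ε₂ ≥
      (ε₂ - (1 - ε₂) / (1 - ε₁) * ((ε₂ / ε₁) * γ + (ρ - 1) * (1 - ε₁) - γ)) / 2 := by
  obtain ⟨hε₁₀, hε₁₁⟩ := hε₁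
  obtain ⟨hε₂₀, hε₂₁⟩ := hε₂
  have hm : (m : ℝ) = (ρ - 1) * k := by rw [hρ]; push_cast; field_simp; ring
  have hH₁ : γ * k ≤ expectHRank A ε₁ (1 - ε₁) := by
    have hBER₁ := sub_expectHRank_le_two_mul_becBER hk A g₁ hε₁₀.le hε₁₁.le
    have := mul_le_mul_of_nonneg_left hach (by positivity : (0 : ℝ) ≤ 2 * k)
    rw [hγ]
    linarith
  have hH₂ := expectHRank_le_of_lt A hε₂₀ h21 hε₁₁
  have hBER₂ := sub_expectHRank_le_two_mul_becBER hk A g₂ hε₂₀.le hε₂₁.le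
  rw [Fintype.card_fin, hm] at hH₂
  rw [ge_iff_le, ← mul_le_mul_iff_of_pos_left (by positivity : (0 : ℝ) < 2 * k)]
  have hc : 0 ≤ (1 - ε₂) / (1 - ε₁) := div_nonneg (by linarith) (by linarith)
  have hβ : 0 ≤ 1 - ε₂ / ε₁ := sub_nonneg.2 (div_le_one_of_le₀ h21.le hε₁₀.le)
  calc 2 * k * ((ε₂ - (1 - ε₂) / (1 - ε₁) * (ε₂ / ε₁ * γ + (ρ - 1) * (1 - ε₁) - γ)) / 2)
      = ε₂ * k - (1 - ε₂) / (1 - ε₁) * ((1 - ε₁) * ((ρ - 1) * k) - (1 - ε₂ / ε₁) * (γ * k)) := by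
        ring
    _ ≤ ε₂ * k - expectHRank A ε₂ (1 - ε₂) := by
        linarith [mul_le_mul_of_nonneg_left (mul_le_mul_of_nonneg_left hH₁ hβ) hc]
    _ ≤ _ := hBER₂

/-- Two-point converse for systematic linear codes (Theorem 3): if the systematic
linear code `x ↦ (x, xA)` of rate `1/ρ` achieves `BER(ε₁) ≤ δ₁ ≤ ε₁/2` (for some
decoder, e.g. the optimal one), then for every decoder its BER at `ε₂ < ε₁` is at
least `(ε₂ - ((1-ε₂)/(1-ε₁))·[(ε₂/ε₁)γ + (ρ-1)(1-ε₁) - γ])/2`, where `γ = ε₁ - 2δ₁`. -/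
theorem systematic_linear_two_point_converse {k m : ℕ} (hk : 0 < k)
    (A : Matrix (Fin k) (Fin m) (ZMod 2))
    (ρ : ℝ) (hρ : ρ = ((k + m : ℕ) : ℝ) / k)
    (ε₁ ε₂ δ₁ : ℝ) (hε₁ : ε₁ ∈ Set.Ioo (0:ℝ) 1) (hε₂ : ε₂ ∈ Set.Ioo (0:ℝ) 1)
    (h21 : ε₂ < ε₁) (hδ₁ : δ₁ ≤ ε₁ / 2)
    (γ : ℝ) (hγ : γ = ε₁ - 2 * δ₁)
    (g₁ g₂ : ((Fin k ⊕ Fin m) → Option (ZMod 2)) → Fin k → ZMod 2)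
    (hach : becBER k (fun s => Sum.elim s (Matrix.vecMul s A)) g₁ ε₁ ≤ δ₁) :
    becBER k (fun s => Sum.elim s (Matrix.vecMul s A)) g₂ ε₂ ≥
      (ε₂ - (1 - ε₂) / (1 - ε₁) * ((ε₂ / ε₁) * γ + (ρ - 1) * (1 - ε₁) - γ)) / 2 :=
  systematic_linear_two_point_converse_general hk A ρ hρ ε₁ ε₂ δ₁ hε₁ hε₂ h21 γ hγ g₁ g₂ hach
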